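/- arXiv:2408.13804 — 6 statements merged into one kernel-verified Lean document; each statement's English description precedes it below -/
import Mathlib

section
/- Let β, r, θ, c > 0 and let V₁ : ℝ² → ℝ² be the map V₁(u,v) = (u(2−u) − uv/(1+cu), βuv/(1+cu) + (1−r)v − θuv). For u > 0 and v > 0, the point (u,v) is a fixed point of V₁ if and only if 0 < u < 1, β = (r + θu)(1 + cu)/u, and v = (1 − u)(1 + cu). -/
/-- For β, r, θ, c > 0 and the map
V₁(u,v) = (u(2−u) − uv/(1+cu), βuv/(1+cu) + (1−r)v − θuv), a point (u,v) with
u > 0, v > 0 is a fixed point of V₁ iff 0 < u < 1, β = (r + θu)(1 + cu)/u and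
v = (1 − u)(1 + cu). -/
theorem stmt_1 (β r θ c : ℝ) (hβ : 0 < β) (hr : 0 < r) (hθ : 0 < θ) (hc : 0 < c)
    (V₁ : ℝ × ℝ → ℝ × ℝ)
    (hV : ∀ p : ℝ × ℝ, V₁ p =
      (p.1 * (2 - p.1) - p.1 * p.2 / (1 + c * p.1),
       β * p.1 * p.2 / (1 + c * p.1) + (1 - r) * p.2 - θ * p.1 * p.2))
    (u v : ℝ) (hu : 0 < u) (hv : 0 < v) :
    V₁ (u, v) = (u, v) ↔
      (0 < u ∧ u < 1 ∧ β = (r + θ * u) * (1 + c * u) / u ∧ v = (1 - u) * (1 + c * u)) := by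
  have hd : (0:ℝ) < 1 + c * u := by positivity
  have hdne : (1 + c * u) ≠ 0 := ne_of_gt hd
  have hune : u ≠ 0 := ne_of_gt hu
  have hvne : v ≠ 0 := ne_of_gt hv
  rw [hV]
  simp only [Prod.mk.injEq]
  constructor
  · rintro ⟨e1, e2⟩
    have hveq : v = (1 - u) * (1 + c * u) := by
      field_simp at e1
      nlinarith [mul_pos hu hd]
    have hu1 : u < 1 := by
      nlinarith
    have hβeq : β = (r + θ * u) * (1 + c * u) / u := by
      field_simp at e2 ⊢
      nlinarith [mul_pos hu hv]
    exact ⟨hu, hu1, hβeq, hveq⟩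
  · rintro ⟨_, hu1, hβeq, hveq⟩
    subst hβeq hveq
    constructor <;> field_simp <;> ring
end

section
/- Let β, r, θ, c > 0 and suppose that either (r ≥ cθ and β > (c+1)(r+θ)), or (r < cθ and β ≥ (c+1)(r+θ)), or (r < cθ and β = (√θ + √(rc))²). Then the map V₁(u,v) = (u(2−u) − uv/(1+cu), βuv/(1+cu) + (1−r)v − θuv) has exactly one fixed point (u₋, v₋) with both coordinates strictly positive, where u₋ = (β − rc − θ − √((β − rc − θ)² − 4crθ))/(2cθ) and v₋ = (1 − u₋)(1 + cu₋). -/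
set_option maxHeartbeats 1000000


/-- Under the stated parameter conditions, the map V₁ has exactly one
fixed point with both coordinates strictly positive, namely (u₋, v₋) with
u₋ = (β − rc − θ − √((β − rc − θ)² − 4crθ))/(2cθ) and v₋ = (1 − u₋)(1 + cu₋). -/
theorem stmt_2 (β r θ c : ℝ) (hβ : 0 < β) (hr : 0 < r) (hθ : 0 < θ) (hc : 0 < c)
    (V₁ : ℝ × ℝ → ℝ × ℝ)
    (hV : ∀ p : ℝ × ℝ, V₁ p =
      (p.1 * (2 - p.1) - p.1 * p.2 / (1 + c * p.1),
       β * p.1 * p.2 / (1 + c * p.1) + (1 - r) * p.2 - θ * p.1 * p.2))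
    (hcond : (r ≥ c * θ ∧ β > (c + 1) * (r + θ)) ∨
             (r < c * θ ∧ β ≥ (c + 1) * (r + θ)) ∨
             (r < c * θ ∧ β = (Real.sqrt θ + Real.sqrt (r * c)) ^ 2)) :
    ∀ p : ℝ × ℝ, (V₁ p = p ∧ 0 < p.1 ∧ 0 < p.2) ↔
      p = ((β - r * c - θ - Real.sqrt ((β - r * c - θ) ^ 2 - 4 * c * r * θ)) / (2 * c * θ),
           (1 - (β - r * c - θ - Real.sqrt ((β - r * c - θ) ^ 2 - 4 * c * r * θ)) / (2 * c * θ)) *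
           (1 + c * ((β - r * c - θ - Real.sqrt ((β - r * c - θ) ^ 2 - 4 * c * r * θ)) / (2 * c * θ)))) := by
  have hcθ : (0:ℝ) < c * θ := by positivity
  set s := Real.sqrt ((β - r * c - θ) ^ 2 - 4 * c * r * θ) with hsdef
  have hs0 : 0 ≤ s := hsdef ▸ Real.sqrt_nonneg _
  clear_value s
  -- the key facts about the parameters, proved case by case
  have hfacts : 0 ≤ (β - r * c - θ) ^ 2 - 4 * c * r * θ ∧ 0 < β - r * c - θ ∧
      β - r * c - θ - s < 2 * (c * θ) ∧ (2 * (c * θ) ≤ β - r * c - θ + s ∨ s = 0) := by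
    have main : (c + 1) * (r + θ) < β → (0 ≤ (β - r * c - θ) ^ 2 - 4 * c * r * θ ∧
        0 < β - r * c - θ ∧ β - r * c - θ - s < 2 * (c * θ) ∧
        (2 * (c * θ) ≤ β - r * c - θ + s ∨ s = 0)) := by
      intro h2
      have hAr : r + c * θ < β - r * c - θ := by nlinarith
      have hApos : 0 < β - r * c - θ := by nlinarith
      have hD : 0 ≤ (β - r * c - θ) ^ 2 - 4 * c * r * θ := by
        nlinarith [sq_nonneg (r - c * θ)]
      have hs2 : s ^ 2 = (β - r * c - θ) ^ 2 - 4 * c * r * θ := hsdef ▸ Real.sq_sqrt hD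
      have hkey : ((β - r * c - θ) - 2 * (c * θ)) ^ 2 < s ^ 2 := by nlinarith
      refine ⟨hD, hApos, ?_, Or.inl ?_⟩
      · nlinarith [hkey, hs0]
      · nlinarith [hkey, hs0]
    rcases hcond with ⟨h1, h2⟩ | ⟨h1, h2⟩ | ⟨h1, h2⟩
    · exact main h2
    · rcases lt_or_eq_of_le h2 with hlt | heq
      · exact main hlt
      · -- heq : (c+1)*(r+θ) = β
        have hA : β - r * c - θ = r + c * θ := by linear_combination -heq
        have hDval : (β - r * c - θ) ^ 2 - 4 * c * r * θ = (c * θ - r) ^ 2 := by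
          linear_combination (β - r * c - θ + r + c * θ) * hA
        have hsval : s = c * θ - r := by
          rw [hsdef, hDval]; exact Real.sqrt_sq (by linarith)
        refine ⟨by rw [hDval]; positivity, by rw [hA]; positivity, by
          rw [hsval, hA]; linarith, Or.inl (by rw [hsval, hA]; linarith)⟩
    · -- h2 : β = (√θ + √(rc))^2
      have ht : Real.sqrt θ ^ 2 = θ := Real.sq_sqrt hθ.le
      have hrc : Real.sqrt (r * c) ^ 2 = r * c := Real.sq_sqrt (by positivity)
      have hA : β - r * c - θ = 2 * Real.sqrt θ * Real.sqrt (r * c) := by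
        rw [h2]; linear_combination ht + hrc
      have hDval : (β - r * c - θ) ^ 2 - 4 * c * r * θ = 0 := by
        rw [hA]; linear_combination (4 * Real.sqrt (r * c) ^ 2) * ht + (4 * θ) * hrc
      have hsval : s = 0 := by rw [hsdef, hDval, Real.sqrt_zero]
      have hApos : 0 < β - r * c - θ := by rw [hA]; positivity
      have hlt : β - r * c - θ < 2 * (c * θ) := by
        nlinarith [hDval, hApos, hcθ, h1, mul_pos hc hθ]
      exact ⟨by rw [hDval], hApos, by rw [hsval]; linarith, Or.inr hsval⟩
  obtain ⟨hD, hApos, hu1, hup⟩ := hfacts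
  have hs2 : s ^ 2 = (β - r * c - θ) ^ 2 - 4 * c * r * θ := hsdef ▸ Real.sq_sqrt hD
  set u₀ := (β - r * c - θ - s) / (2 * c * θ) with hu₀def
  clear_value u₀
  have hnum : 0 < β - r * c - θ - s := by nlinarith [hs2, hs0, hApos, mul_pos (mul_pos hc hr) hθ]
  have hu0pos : 0 < u₀ := hu₀def ▸ div_pos hnum (by positivity)
  have hu0lt1 : u₀ < 1 := by
    rw [hu₀def, div_lt_one (by positivity)]; linarith
  have hroot₀ : c * θ * u₀ ^ 2 - (β - r * c - θ) * u₀ + r = 0 := by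
    have h : c * θ * u₀ ^ 2 - (β - r * c - θ) * u₀ + r
        = (s ^ 2 - ((β - r * c - θ) ^ 2 - 4 * c * r * θ)) / (4 * c * θ) := by
      rw [hu₀def]; field_simp; ring
    rw [h, hs2, sub_self, zero_div]
  have huniq : ∀ u : ℝ, 0 < u → u < 1 → c * θ * u ^ 2 - (β - r * c - θ) * u + r = 0 → u = u₀ := by
    intro u hu hul hroot
    have hfactor : (2 * c * θ * u - (β - r * c - θ - s)) * (2 * c * θ * u - (β - r * c - θ + s)) = 0 := by
      linear_combination (4 * c * θ) * hroot - hs2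
    rcases mul_eq_zero.1 hfactor with h | h
    · rw [hu₀def, eq_div_iff (by positivity : (2 * c * θ : ℝ) ≠ 0)]
      linear_combination h
    · rcases hup with hle | hs00
      · exfalso; nlinarith [h, hle, hcθ, hul]
      · rw [hu₀def, eq_div_iff (by positivity : (2 * c * θ : ℝ) ≠ 0)]
        linear_combination h + 2 * hs00
  intro p
  constructor
  · rintro ⟨hfix, hu, hv⟩
    rw [hV] at hfix
    have h1 : p.1 * (2 - p.1) - p.1 * p.2 / (1 + c * p.1) = p.1 := congrArg Prod.fst hfix
    have h2 : β * p.1 * p.2 / (1 + c * p.1) + (1 - r) * p.2 - θ * p.1 * p.2 = p.2 :=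
      congrArg Prod.snd hfix
    have hden : (0:ℝ) < 1 + c * p.1 := by nlinarith [mul_pos hc hu]
    have hveq : p.2 = (1 - p.1) * (1 + c * p.1) := by
      have h1' : p.1 * p.2 = p.1 * ((1 - p.1) * (1 + c * p.1)) := by
        field_simp at h1
        linear_combination -p.1 * h1
      exact mul_left_cancel₀ hu.ne' h1'
    have hul : p.1 < 1 := by nlinarith [hveq, hv, hden]
    have hroot : c * θ * p.1 ^ 2 - (β - r * c - θ) * p.1 + r = 0 := by
      have h2' : p.2 * (c * θ * p.1 ^ 2 - (β - r * c - θ) * p.1 + r) = 0 := by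
        field_simp at h2
        linear_combination -p.2 * h2
      rcases mul_eq_zero.1 h2' with h | h
      · exact absurd h hv.ne'
      · exact h
    have hpu : p.1 = u₀ := huniq p.1 hu hul hroot
    have : p = (p.1, p.2) := rfl
    rw [this, hveq, hpu]
  · rintro rfl
    refine ⟨?_, hu0pos, mul_pos (by linarith) (by nlinarith [hu0pos, hc])⟩
    rw [hV]
    have hden : (0:ℝ) < 1 + c * u₀ := by nlinarith [mul_pos hc hu0pos]
    simp only [Prod.mk.injEq]
    constructor
    · field_simp
      ring
    · field_simp
      linear_combination (-(1 - u₀)) * hroot₀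
end

section
/- Let β, r, θ, c > 0 with r < cθ and (√θ + √(rc))² < β < (c+1)(r+θ). Then the map V₁(u,v) = (u(2−u) − uv/(1+cu), βuv/(1+cu) + (1−r)v − θuv) has exactly two fixed points with both coordinates strictly positive, namely (u₋, v₋) and (u₊, v₊), where u∓ = (β − rc − θ ∓ √((β − rc − θ)² − 4crθ))/(2cθ) and v∓ = (1 − u∓)(1 + cu∓); moreover u₋ < u₊ and both lie in (0,1). -/
set_option maxHeartbeats 2000000 in
/-- For β, r, θ, c > 0 with r < cθ and (√θ + √(rc))² < β < (c+1)(r+θ),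
the map V₁ has exactly two positive fixed points (u₋, v₋) and (u₊, v₊), with
u∓ = (β − rc − θ ∓ √((β − rc − θ)² − 4crθ))/(2cθ), v∓ = (1 − u∓)(1 + cu∓);
moreover u₋ < u₊ and both lie in (0,1). -/
theorem stmt_3 (β r θ c : ℝ) (hβ : 0 < β) (hr : 0 < r) (hθ : 0 < θ) (hc : 0 < c)
    (V₁ : ℝ × ℝ → ℝ × ℝ)
    (hV : ∀ p : ℝ × ℝ, V₁ p =
      (p.1 * (2 - p.1) - p.1 * p.2 / (1 + c * p.1),
       β * p.1 * p.2 / (1 + c * p.1) + (1 - r) * p.2 - θ * p.1 * p.2))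
    (hrc : r < c * θ)
    (hβ₁ : (Real.sqrt θ + Real.sqrt (r * c)) ^ 2 < β)
    (hβ₂ : β < (c + 1) * (r + θ)) :
    let um := (β - r * c - θ - Real.sqrt ((β - r * c - θ) ^ 2 - 4 * c * r * θ)) / (2 * c * θ)
    let up := (β - r * c - θ + Real.sqrt ((β - r * c - θ) ^ 2 - 4 * c * r * θ)) / (2 * c * θ)
    let vm := (1 - um) * (1 + c * um)
    let vp := (1 - up) * (1 + c * up)
    (∀ p : ℝ × ℝ, (V₁ p = p ∧ 0 < p.1 ∧ 0 < p.2) ↔ (p = (um, vm) ∨ p = (up, vp))) ∧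
    (um, vm) ≠ (up, vp) ∧
    um < up ∧ 0 < um ∧ um < 1 ∧ 0 < up ∧ up < 1 := by
  have hrc' : (0:ℝ) < r * c := mul_pos hr hc
  have hsqθ : Real.sqrt θ ^ 2 = θ := Real.sq_sqrt hθ.le
  have hsqrc : Real.sqrt (r*c) ^ 2 = r*c := Real.sq_sqrt hrc'.le
  have hA1 : 2 * Real.sqrt θ * Real.sqrt (r*c) < β - r*c - θ := by nlinarith [hβ₁]
  have hA0 : 0 < β - r*c - θ := by
    nlinarith [Real.sqrt_nonneg θ, Real.sqrt_nonneg (r*c), hA1]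
  have hD0 : 0 < (β - r * c - θ) ^ 2 - 4 * c * r * θ := by
    have hnn : (0:ℝ) ≤ 2 * Real.sqrt θ * Real.sqrt (r*c) := by positivity
    have h4 := mul_self_lt_mul_self hnn hA1
    nlinarith [h4, hsqθ, hsqrc]
  set s := Real.sqrt ((β - r * c - θ) ^ 2 - 4 * c * r * θ) with hsdef
  have hs2 : s ^ 2 = (β - r * c - θ) ^ 2 - 4 * c * r * θ := Real.sq_sqrt hD0.le
  have hs0 : 0 < s := Real.sqrt_pos.mpr hD0
  have hsA : s < β - r*c - θ := by
    nlinarith [hs2, hs0, hA0, mul_pos hc (mul_pos hr hθ)]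
  have h2cθ : (0:ℝ) < 2 * c * θ := by positivity
  have hAcθ : β - r*c - θ < r + c*θ := by nlinarith [hβ₂]
  have hs2cθ : s < 2*c*θ - (β - r*c - θ) := by
    nlinarith [hs2, hs0, mul_pos hc hθ]
  intro um up vm vp
  have hum : um = (β - r*c - θ - s) / (2*c*θ) := rfl
  have hup : up = (β - r*c - θ + s) / (2*c*θ) := rfl
  have hvm : vm = (1 - um) * (1 + c * um) := rfl
  have hvp : vp = (1 - up) * (1 + c * up) := rfl
  clear_value vm vp um up
  have hum0 : 0 < um := by rw [hum]; exact div_pos (by linarith) h2cθ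
  have hup0 : 0 < up := by rw [hup]; exact div_pos (by linarith) h2cθ
  have humlt : um < up := by rw [hum, hup]; gcongr <;> linarith
  have hup1 : up < 1 := by rw [hup, div_lt_one h2cθ]; linarith
  have hum1 : um < 1 := lt_trans humlt hup1
  have humm : 2*c*θ*um = β - r*c - θ - s := by
    rw [hum]; field_simp
  have hupm : 2*c*θ*up = β - r*c - θ + s := by
    rw [hup]; field_simp
  have h4cθ : (4*c*θ) ≠ 0 := by positivity
  have hqm : c*θ*um^2 - (β - r*c - θ)*um + r = 0 := by
    have h4 : (4*c*θ) * (c*θ*um^2 - (β - r*c - θ)*um + r) = 0 := by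
      linear_combination (2*c*θ*um - (β-r*c-θ) - s) * humm + hs2
    exact (mul_eq_zero.mp h4).resolve_left h4cθ
  have hqp : c*θ*up^2 - (β - r*c - θ)*up + r = 0 := by
    have h4 : (4*c*θ) * (c*θ*up^2 - (β - r*c - θ)*up + r) = 0 := by
      linear_combination (2*c*θ*up - (β-r*c-θ) + s) * hupm + hs2
    exact (mul_eq_zero.mp h4).resolve_left h4cθ
  have hvm0 : 0 < vm := by
    rw [hvm]
    exact mul_pos (by linarith) (by nlinarith [mul_pos hc hum0])
  have hvp0 : 0 < vp := by
    rw [hvp]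
    exact mul_pos (by linarith) (by nlinarith [mul_pos hc hup0])
  refine ⟨?_, ?_, humlt, hum0, hum1, hup0, hup1⟩
  · intro p
    constructor
    · rintro ⟨hfix, hu, hv⟩
      rw [hV p, Prod.ext_iff] at hfix
      obtain ⟨h1, h2⟩ := hfix
      simp only at h1 h2
      have h1cu : (0:ℝ) < 1 + c * p.1 := by positivity
      have hh1 : p.1 * p.2 = p.1 * (1 - p.1) * (1 + c * p.1) := by
        have : p.1 * p.2 / (1 + c * p.1) = p.1 * (1 - p.1) := by linarith
        rw [div_eq_iff (ne_of_gt h1cu)] at this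
        linarith [this]
      have hveq : p.2 = (1 - p.1) * (1 + c * p.1) := by
        have h1' : p.1 * p.2 = p.1 * ((1 - p.1) * (1 + c * p.1)) := by
          linear_combination hh1
        exact mul_left_cancel₀ (ne_of_gt hu) h1'
      have hh2 : β * p.1 * p.2 = (r * p.2 + θ * p.1 * p.2) * (1 + c * p.1) := by
        have : β * p.1 * p.2 / (1 + c * p.1) = r * p.2 + θ * p.1 * p.2 := by linarith
        rw [div_eq_iff (ne_of_gt h1cu)] at this
        linarith [this]
      have hq : c*θ*p.1^2 - (β - r*c - θ)*p.1 + r = 0 := by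
        have h2' : p.2 * (c*θ*p.1^2 - (β - r*c - θ)*p.1 + r) = p.2 * 0 := by
          linear_combination -hh2
        exact mul_left_cancel₀ (ne_of_gt hv) h2'
      have hfac : (2*c*θ*p.1 - (β - r*c - θ) - s) * (2*c*θ*p.1 - (β - r*c - θ) + s) = 0 := by
        linear_combination 4*c*θ*hq - hs2
      rcases mul_eq_zero.mp hfac with h | h
      · right
        have hu' : p.1 = up := by
          rw [hup, eq_div_iff (ne_of_gt h2cθ)]; linarith
        refine Prod.ext hu' ?_
        rw [hveq, hu', hvp]
      · left
        have hu' : p.1 = um := by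
          rw [hum, eq_div_iff (ne_of_gt h2cθ)]; linarith
        refine Prod.ext hu' ?_
        rw [hveq, hu', hvm]
    · have h1cum : (0:ℝ) < 1 + c * um := by positivity
      have h1cup : (0:ℝ) < 1 + c * up := by positivity
      have keym : β * um / (1 + c * um) = r + θ * um := by
        rw [div_eq_iff (ne_of_gt h1cum)]; linear_combination -hqm
      have keyp : β * up / (1 + c * up) = r + θ * up := by
        rw [div_eq_iff (ne_of_gt h1cup)]; linear_combination -hqp
      rintro (rfl | rfl)
      · refine ⟨?_, hum0, hvm0⟩
        rw [hV]
        simp only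
        refine Prod.ext ?_ ?_ <;> simp only [hvm]
        · field_simp
          ring
        · rw [show β * um * ((1 - um) * (1 + c * um)) / (1 + c * um)
              = (β * um / (1 + c * um)) * ((1 - um) * (1 + c * um)) from by ring, keym]
          ring
      · refine ⟨?_, hup0, hvp0⟩
        rw [hV]
        simp only
        refine Prod.ext ?_ ?_ <;> simp only [hvp]
        · field_simp
          ring
        · rw [show β * up * ((1 - up) * (1 + c * up)) / (1 + c * up)
              = (β * up / (1 + c * up)) * ((1 - up) * (1 + c * up)) from by ring, keyp]
          ring
  · intro h
    rw [Prod.ext_iff] at h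
    exact absurd h.1 (ne_of_lt humlt)
end

section
/- Let β, r, θ, c > 0 and suppose that either (r ≥ cθ and β ≤ (c+1)(r+θ)) or (r < cθ and β < (√θ + √(rc))²). Then the map V₁(u,v) = (u(2−u) − uv/(1+cu), βuv/(1+cu) + (1−r)v − θuv) has no fixed point with both coordinates strictly positive. -/
/-- For β, r, θ, c > 0 with either (r ≥ cθ and β ≤ (c+1)(r+θ)) or
(r < cθ and β < (√θ + √(rc))²), the map V₁ has no fixed point with both
coordinates strictly positive. -/
theorem stmt_4 (β r θ c : ℝ) (hβ : 0 < β) (hr : 0 < r) (hθ : 0 < θ) (hc : 0 < c)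
    (V₁ : ℝ × ℝ → ℝ × ℝ)
    (hV : ∀ p : ℝ × ℝ, V₁ p =
      (p.1 * (2 - p.1) - p.1 * p.2 / (1 + c * p.1),
       β * p.1 * p.2 / (1 + c * p.1) + (1 - r) * p.2 - θ * p.1 * p.2))
    (hcond : (r ≥ c * θ ∧ β ≤ (c + 1) * (r + θ)) ∨
             (r < c * θ ∧ β < (Real.sqrt θ + Real.sqrt (r * c)) ^ 2)) :
    ¬ ∃ p : ℝ × ℝ, V₁ p = p ∧ 0 < p.1 ∧ 0 < p.2 := by
  rintro ⟨⟨u, v⟩, hfix, hu, hv⟩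
  rw [hV] at hfix
  have h1 : u * (2 - u) - u * v / (1 + c * u) = u := congrArg Prod.fst hfix
  have h2 : β * u * v / (1 + c * u) + (1 - r) * v - θ * u * v = v :=
    congrArg Prod.snd hfix
  have hd : (0:ℝ) < 1 + c * u := by positivity
  have hdne : (1 + c * u) ≠ 0 := ne_of_gt hd
  -- first equation: v = (1-u)(1+cu)
  have k1 : u * v = (u * (2 - u) - u) * (1 + c * u) := by
    have : u * v / (1 + c * u) = u * (2 - u) - u := by linarith
    field_simp at this
    linear_combination u * this
  have e1 : v = (1 - u) * (1 + c * u) := by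
    have : u * v = u * ((1 - u) * (1 + c * u)) := by nlinarith [k1]
    exact mul_left_cancel₀ (ne_of_gt hu) this
  have hu1 : u < 1 := by nlinarith [e1, mul_pos hd hv]
  -- second equation: β u = (r + θ u)(1 + c u)
  have k2 : β * u * v = (r * v + θ * u * v) * (1 + c * u) := by
    have : β * u * v / (1 + c * u) = r * v + θ * u * v := by linarith
    field_simp at this
    linear_combination v * this
  have e2 : β * u = (r + θ * u) * (1 + c * u) := by
    have : v * (β * u) = v * ((r + θ * u) * (1 + c * u)) := by nlinarith [k2]
    exact mul_left_cancel₀ (ne_of_gt hv) this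
  rcases hcond with ⟨hrc, hb⟩ | ⟨hrc, hb⟩
  · -- case r ≥ cθ
    have hpos : 0 < (1 - u) * (r - c * θ * u) := by
      apply mul_pos (by linarith)
      nlinarith
    nlinarith [mul_le_mul_of_nonneg_right hb hu.le]
  · -- case r < cθ
    set s := Real.sqrt θ with hs
    set t := Real.sqrt (r * c) with ht
    have hs2 : s ^ 2 = θ := Real.sq_sqrt hθ.le
    have ht2 : t ^ 2 = r * c := Real.sq_sqrt (by positivity)
    have hsn : 0 ≤ s := Real.sqrt_nonneg _
    have htn : 0 ≤ t := Real.sqrt_nonneg _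
    have hst : Real.sqrt r * Real.sqrt (c * θ) = s * t := by
      rw [hs, ht, ← Real.sqrt_mul hr.le, ← Real.sqrt_mul hθ.le]
      congr 1; ring
    have hr2 : Real.sqrt r ^ 2 = r := Real.sq_sqrt hr.le
    have hct2 : Real.sqrt (c * θ) ^ 2 = c * θ := Real.sq_sqrt (by positivity)
    have hamgm : 2 * (s * t) * u ≤ r + c * θ * u ^ 2 := by
      nlinarith [sq_nonneg (Real.sqrt r - Real.sqrt (c * θ) * u)]
    nlinarith [mul_lt_mul_of_pos_right hb hu, hamgm]
end

section
/- Let β, r, θ, c > 0 and let V₁(u,v) = (u(2−u) − uv/(1+cu), βuv/(1+cu) + (1−r)v − θuv). The eigenvalues of the Jacobian matrix of V₁ at the fixed point (1,0) are 0 and 1 + β/(1+c) − r − θ; consequently (1,0) is attractive (both eigenvalues of modulus < 1) if and only if β/(1+c) < r + θ < 2 + β/(1+c), non-hyperbolic if and only if r + θ = β/(1+c) or r + θ = 2 + β/(1+c), and a saddle otherwise. -/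
/-- The eigenvalues of the Jacobian of V₁ at the fixed point (1,0) are
0 and 1 + β/(1+c) − r − θ; consequently (1,0) is attractive iff
β/(1+c) < r + θ < 2 + β/(1+c), non-hyperbolic iff r + θ = β/(1+c) or
r + θ = 2 + β/(1+c), and a saddle otherwise. -/
theorem stmt_6 (β r θ c : ℝ) (hβ : 0 < β) (hr : 0 < r) (hθ : 0 < θ) (hc : 0 < c)
    (V₁ : ℝ × ℝ → ℝ × ℝ)
    (hV : ∀ p : ℝ × ℝ, V₁ p =
      (p.1 * (2 - p.1) - p.1 * p.2 / (1 + c * p.1),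
       β * p.1 * p.2 / (1 + c * p.1) + (1 - r) * p.2 - θ * p.1 * p.2)) :
    spectrum ℝ ((fderiv ℝ V₁ (1, 0)).toLinearMap : Module.End ℝ (ℝ × ℝ)) =
      {0, 1 + β / (1 + c) - r - θ} ∧
    ((|(0 : ℝ)| < 1 ∧ |1 + β / (1 + c) - r - θ| < 1) ↔
      (β / (1 + c) < r + θ ∧ r + θ < 2 + β / (1 + c))) ∧
    ((|(0 : ℝ)| = 1 ∨ |1 + β / (1 + c) - r - θ| = 1) ↔
      (r + θ = β / (1 + c) ∨ r + θ = 2 + β / (1 + c))) ∧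
    (((|(0 : ℝ)| < 1 ∧ |1 + β / (1 + c) - r - θ| > 1) ∨
      (|(0 : ℝ)| > 1 ∧ |1 + β / (1 + c) - r - θ| < 1)) ↔
      (¬ (β / (1 + c) < r + θ ∧ r + θ < 2 + β / (1 + c)) ∧
       ¬ (r + θ = β / (1 + c) ∨ r + θ = 2 + β / (1 + c)))) := by
  have hc1 : (1 : ℝ) + c ≠ 0 := by positivity
  -- Step 1: compute the action of the Jacobian
  have key : ∀ z : ℝ × ℝ, fderiv ℝ V₁ (1, 0) z =
      (-(1 / (1 + c)) * z.2, (1 + β / (1 + c) - r - θ) * z.2) := by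
    have hden : (1 : ℝ) + c * (1, (0:ℝ)).1 ≠ 0 := by simpa using hc1
    have h1 : HasFDerivAt (fun p : ℝ × ℝ => p.1) (ContinuousLinearMap.fst ℝ ℝ ℝ) (1, 0) :=
      hasFDerivAt_fst
    have h2 : HasFDerivAt (fun p : ℝ × ℝ => p.2) (ContinuousLinearMap.snd ℝ ℝ ℝ) (1, 0) :=
      hasFDerivAt_snd
    have hd : HasFDerivAt (fun p : ℝ × ℝ => 1 + c * p.1) _ (1, 0) :=
      (hasFDerivAt_const (1:ℝ) _).add (h1.const_mul c)
    have hinv : HasFDerivAt (fun p : ℝ × ℝ => (1 + c * p.1)⁻¹) _ (1, 0) :=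
      HasFDerivAt.comp (x := ((1:ℝ),(0:ℝ))) (hasFDerivAt_inv' (𝕜 := ℝ) hden) hd
    have hf : HasFDerivAt
        (fun p : ℝ × ℝ => p.1 * (2 - p.1) - p.1 * p.2 * (1 + c * p.1)⁻¹) _ (1, 0) :=
      (h1.mul ((hasFDerivAt_const (2:ℝ) _).sub h1)).sub ((h1.mul h2).mul hinv)
    have hg : HasFDerivAt (fun p : ℝ × ℝ =>
        β * p.1 * p.2 * (1 + c * p.1)⁻¹ + (1 - r) * p.2 - θ * p.1 * p.2) _ (1, 0) :=
      ((((h1.const_mul β).mul h2).mul hinv).add (h2.const_mul (1 - r))).sub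
        ((h1.const_mul θ).mul h2)
    have hEq : V₁ = fun p : ℝ × ℝ => (p.1 * (2 - p.1) - p.1 * p.2 * (1 + c * p.1)⁻¹,
        β * p.1 * p.2 * (1 + c * p.1)⁻¹ + (1 - r) * p.2 - θ * p.1 * p.2) := by
      funext p; rw [hV]; simp [div_eq_mul_inv]
    have hVf := HasFDerivAt.prodMk hf hg
    rw [← hEq] at hVf
    intro z
    rw [hVf.fderiv]
    simp only [ContinuousLinearMap.sub_apply, ContinuousLinearMap.add_apply,
      ContinuousLinearMap.smul_apply, ContinuousLinearMap.prod_apply,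
      ContinuousLinearMap.comp_apply, ContinuousLinearMap.neg_apply,
      ContinuousLinearMap.mulLeftRight_apply, ContinuousLinearMap.coe_fst',
      ContinuousLinearMap.coe_snd', ContinuousLinearMap.zero_apply, smul_eq_mul, Pi.mul_apply, Pi.sub_apply]
    rw [Prod.mk.injEq]
    constructor
    · field_simp; ring
    · field_simp; ring
  -- Step 2: spectrum
  have hspec : spectrum ℝ ((fderiv ℝ V₁ (1, 0)).toLinearMap : Module.End ℝ (ℝ × ℝ)) =
      {0, (1 + β / (1 + c) - r - θ)} := by
    set E : Module.End ℝ (ℝ × ℝ) := (fderiv ℝ V₁ (1, 0)).toLinearMap with hE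
    have hEz : ∀ z : ℝ × ℝ, E z = (-(1 / (1 + c)) * z.2, (1 + β / (1 + c) - r - θ) * z.2) := fun z => key z
    ext μ
    rw [← Module.End.hasEigenvalue_iff_mem_spectrum, Module.End.hasEigenvalue_iff,
      Submodule.ne_bot_iff]
    simp only [Set.mem_insert_iff, Set.mem_singleton_iff]
    constructor
    · rintro ⟨v, hv, hv0⟩
      rw [Module.End.mem_eigenspace_iff, hEz] at hv
      have h1 : -(1 / (1 + c)) * v.2 = μ * v.1 := congrArg Prod.fst hv
      have h2 : (1 + β / (1 + c) - r - θ) * v.2 = μ * v.2 := congrArg Prod.snd hv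
      by_cases hy : v.2 = 0
      · left
        have hx : v.1 ≠ 0 := fun h => hv0 (Prod.ext h hy)
        rw [hy, mul_zero] at h1
        exact (mul_eq_zero.mp h1.symm).resolve_right hx
      · right
        have := mul_right_cancel₀ hy h2
        linarith
    · intro hμ
      by_cases hμ0 : μ = 0
      · refine ⟨(1, 0), ?_, by simp⟩
        rw [Module.End.mem_eigenspace_iff, hEz, hμ0]
        simp
      · have hμL : μ = (1 + β / (1 + c) - r - θ) := hμ.resolve_left hμ0
        refine ⟨(-(1 / (1 + c)) / (1 + β / (1 + c) - r - θ), 1), ?_, by simp⟩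
        rw [Module.End.mem_eigenspace_iff, hEz, hμL]
        have hL0 : (1 + β / (1 + c) - r - θ) ≠ 0 := fun h => hμ0 (hμL.trans h)
        simp only [Prod.smul_mk, smul_eq_mul, mul_one, Prod.mk.injEq]
        refine ⟨?_, trivial⟩
        rw [mul_comm]
        exact (div_mul_cancel₀ _ hL0).symm
  refine ⟨hspec, ?_, ?_, ?_⟩
  · simp only [abs_zero, abs_lt]
    constructor
    · rintro ⟨-, h1, h2⟩
      exact ⟨by linarith, by linarith⟩
    · rintro ⟨h1, h2⟩
      exact ⟨by norm_num, by linarith, by linarith⟩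
  · simp only [abs_zero]
    constructor
    · rintro (h | h)
      · norm_num at h
      · rcases (abs_eq (by norm_num : (0:ℝ) ≤ 1)).mp h with h1 | h1
        · left; linarith
        · right; linarith
    · rintro (h | h) <;> right <;>
        rw [abs_eq (by norm_num : (0:ℝ) ≤ 1)] <;> [left; right] <;> linarith
  · simp only [abs_zero, gt_iff_lt]
    constructor
    · rintro (⟨-, h⟩ | ⟨h, -⟩)
      · rcases lt_abs.mp h with h1 | h1
        · refine ⟨?_, ?_⟩
          · rintro ⟨ha, hb'⟩; linarith
          · rintro (ha | ha) <;> linarith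
        · refine ⟨?_, ?_⟩
          · rintro ⟨ha, hb'⟩; linarith
          · rintro (ha | ha) <;> linarith
      · norm_num at h
    · rintro ⟨h1, h2⟩
      left
      refine ⟨by norm_num, ?_⟩
      rw [not_and_or, not_lt, not_lt] at h1
      rw [not_or] at h2
      rw [lt_abs]
      rcases h1 with ha | ha
      · left; have := lt_of_le_of_ne ha h2.1; linarith
      · right; have := lt_of_le_of_ne ha (Ne.symm h2.2); linarith
end

section
/- Let β, r, θ > 0 and 0 < c ≤ 1/2, and suppose that either (r ≥ cθ and β ≤ (c+1)(r+θ)) or (r ≤ cθ and β ≤ (√θ + √(cr))²). Suppose further that one of the following holds: (a1) 0 < θ ≤ 1 and 0 < r ≤ 1−θ; (a2) 0 < θ ≤ 1, 1−θ < r < 1, β > r+θ−1, and c < β/(r+θ−1) − 1; (a3) θ > 1, 0 < r < 1, β > r+θ−1, and c < β/(r+θ−1) − 1. Then the set M₄ = {(u,v) : 0 ≤ u ≤ 1, 0 ≤ v ≤ (2−u)(1+cu)} is invariant under the map V₁(u,v) = (u(2−u) − uv/(1+cu), βuv/(1+cu) + (1−r)v − θuv). -/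
set_option maxHeartbeats 1000000 in
/-- Under the conditions 0 < c ≤ 1/2, (r ≥ cθ and β ≤ (c+1)(r+θ)) or
(r ≤ cθ and β ≤ (√θ + √(cr))²), together with one of (a1)–(a3), the set
M₄ = {(u,v) : 0 ≤ u ≤ 1, 0 ≤ v ≤ (2−u)(1+cu)} is invariant under V₁. -/
theorem stmt_13 (β r θ c : ℝ) (hβ : 0 < β) (hr : 0 < r) (hθ : 0 < θ) (hc : 0 < c)
    (hc2 : c ≤ 1 / 2)
    (V₁ : ℝ × ℝ → ℝ × ℝ)
    (hV : ∀ p : ℝ × ℝ, V₁ p =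
      (p.1 * (2 - p.1) - p.1 * p.2 / (1 + c * p.1),
       β * p.1 * p.2 / (1 + c * p.1) + (1 - r) * p.2 - θ * p.1 * p.2))
    (hcond : (r ≥ c * θ ∧ β ≤ (c + 1) * (r + θ)) ∨
             (r ≤ c * θ ∧ β ≤ (Real.sqrt θ + Real.sqrt (c * r)) ^ 2))
    (ha : (0 < θ ∧ θ ≤ 1 ∧ 0 < r ∧ r ≤ 1 - θ) ∨
          (0 < θ ∧ θ ≤ 1 ∧ 1 - θ < r ∧ r < 1 ∧ β > r + θ - 1 ∧
            c < β / (r + θ - 1) - 1) ∨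
          (θ > 1 ∧ 0 < r ∧ r < 1 ∧ β > r + θ - 1 ∧ c < β / (r + θ - 1) - 1)) :
    V₁ '' {p : ℝ × ℝ | 0 ≤ p.1 ∧ p.1 ≤ 1 ∧ 0 ≤ p.2 ∧ p.2 ≤ (2 - p.1) * (1 + c * p.1)} ⊆
      {p : ℝ × ℝ | 0 ≤ p.1 ∧ p.1 ≤ 1 ∧ 0 ≤ p.2 ∧ p.2 ≤ (2 - p.1) * (1 + c * p.1)} := by

  -- basic consequences of (a1)-(a3)
  have hr1 : r ≤ 1 := by
    rcases ha with ⟨_, hθ1, _, h⟩ | ⟨_, _, _, h, _⟩ | ⟨_, _, h, _⟩ <;> linarith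
  have hβ1 : (1 + c) * (r + θ - 1) ≤ β := by
    rcases ha with ⟨_, _, _, h⟩ | ⟨_, _, h1, _, _, h4⟩ | ⟨h1, h2, _, _, h4⟩
    · nlinarith
    · have hpos : 0 < r + θ - 1 := by linarith
      have h5 : c + 1 < β / (r + θ - 1) := by linarith
      have h6 := (lt_div_iff₀ hpos).mp h5
      nlinarith
    · have hpos : 0 < r + θ - 1 := by linarith
      have h5 : c + 1 < β / (r + θ - 1) := by linarith
      have h6 := (lt_div_iff₀ hpos).mp h5
      nlinarith
  -- nonnegativity of h(u)
  have keyh : ∀ u : ℝ, 0 ≤ u → u ≤ 1 → 0 ≤ β * u + (1 - r - θ * u) * (1 + c * u) := by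
    intro u hu0 hu1
    nlinarith [mul_nonneg (by linarith : (0:ℝ) ≤ 1 - u) (by linarith : (0:ℝ) ≤ 1 - r),
      mul_nonneg hu0 (by linarith : (0:ℝ) ≤ β - (1 + c) * (r + θ - 1)),
      mul_nonneg (mul_nonneg hc.le hθ.le) (mul_nonneg hu0 (by linarith : (0:ℝ) ≤ 1 - u))]
  -- key bound: (2-u) * h(u) ≤ 2
  have key : ∀ u : ℝ, 0 ≤ u → u ≤ 1 →
      (2 - u) * (β * u + (1 - r - θ * u) * (1 + c * u)) ≤ 2 := by
    intro u hu0 hu1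
    rcases hcond with ⟨hrc, hβc⟩ | ⟨hrc, hβc⟩
    · nlinarith [mul_nonneg (mul_nonneg (by linarith : (0:ℝ) ≤ 1 - u)
          (by linarith : (0:ℝ) ≤ 2 - u)) (by nlinarith : (0:ℝ) ≤ r - c * θ * u),
        mul_nonneg hu0 (by nlinarith : (0:ℝ) ≤ 1 - 2 * c + c * u),
        mul_nonneg (by nlinarith : (0:ℝ) ≤ (c + 1) * (r + θ) - β)
          (mul_nonneg hu0 (by linarith : (0:ℝ) ≤ 2 - u))]
    · set x := Real.sqrt (c * θ) with hxdef
      set y := Real.sqrt r with hydef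
      have hx : x ^ 2 = c * θ := Real.sq_sqrt (by positivity)
      have hy : y ^ 2 = r := Real.sq_sqrt hr.le
      have hxy : Real.sqrt θ * Real.sqrt (c * r) = x * y := by
        rw [hxdef, hydef, ← Real.sqrt_mul hθ.le, ← Real.sqrt_mul (by positivity : (0:ℝ) ≤ c * θ)]
        ring_nf
      have hβ2 : β ≤ θ + c * r + 2 * (x * y) := by
        have h1 : (Real.sqrt θ + Real.sqrt (c * r)) ^ 2
            = θ + c * r + 2 * (Real.sqrt θ * Real.sqrt (c * r)) := by
          rw [add_sq, Real.sq_sqrt hθ.le, Real.sq_sqrt (by positivity : (0:ℝ) ≤ c * r)]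
          ring
        rw [h1, hxy] at hβc
        linarith
      have t2 : (0:ℝ) ≤ (2 - u) * (c * θ * u ^ 2 - 2 * (x * y) * u + r) := by
        have h2 : c * θ * u ^ 2 - 2 * (x * y) * u + r = (x * u - y) ^ 2 := by
          rw [← hx, ← hy]; ring
        rw [h2]
        exact mul_nonneg (by linarith) (sq_nonneg _)
      nlinarith [t2, mul_nonneg hu0 (by nlinarith : (0:ℝ) ≤ 1 - 2 * c + c * u),
        mul_nonneg (by linarith : (0:ℝ) ≤ θ + c * r + 2 * (x * y) - β)
          (mul_nonneg hu0 (by linarith : (0:ℝ) ≤ 2 - u))]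
  rintro q ⟨⟨u, v⟩, ⟨hu0, hu1, hv0, hv2⟩, rfl⟩
  rw [hV]
  simp only [Set.mem_setOf_eq] at *
  have hD : (0:ℝ) < 1 + c * u := by nlinarith
  obtain ⟨t, htdef, ht0, htv⟩ : ∃ t : ℝ, t = v / (1 + c * u) ∧ 0 ≤ t ∧ t ≤ 2 - u := by
    refine ⟨v / (1 + c * u), rfl, div_nonneg hv0 hD.le, ?_⟩
    rw [div_le_iff₀ hD]; nlinarith
  obtain ⟨h, hhdef, hh0, hh2⟩ : ∃ h : ℝ, h = β * u + (1 - r - θ * u) * (1 + c * u) ∧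
      0 ≤ h ∧ (2 - u) * h ≤ 2 := ⟨_, rfl, keyh u hu0 hu1, key u hu0 hu1⟩
  have e1 : u * (2 - u) - u * v / (1 + c * u) = u * (2 - u) - u * t := by
    rw [htdef]; ring
  have e2 : β * u * v / (1 + c * u) + (1 - r) * v - θ * u * v = t * h := by
    rw [htdef, hhdef]; field_simp; ring
  rw [e1, e2]
  have key2 : t * h + u * (2 - u - t) ≤ 2 := by
    rcases le_or_gt u h with hc1 | hc1
    · nlinarith [mul_nonneg (by linarith : (0:ℝ) ≤ 2 - u - t) (by linarith : (0:ℝ) ≤ h - u)]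
    · nlinarith [mul_nonneg ht0 (by linarith : (0:ℝ) ≤ u - h), sq_nonneg (1 - u)]
  have hu'0 : 0 ≤ u * (2 - u) - u * t := by
    nlinarith [mul_nonneg hu0 (by linarith : (0:ℝ) ≤ 2 - u - t)]
  have hu'1 : u * (2 - u) - u * t ≤ 1 := by
    nlinarith [sq_nonneg (1 - u), mul_nonneg hu0 ht0]
  refine ⟨hu'0, hu'1, mul_nonneg ht0 hh0, ?_⟩
  nlinarith [key2, mul_nonneg (mul_nonneg hc.le hu'0)
    (by linarith : (0:ℝ) ≤ 2 - (u * (2 - u) - u * t))]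
end
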